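/- arXiv:1203.4448 — 2 statements merged into one kernel-verified Lean document; each statement's English description precedes it below -/
import Mathlib

section
/- Let R be a commutative Noetherian local ring, I an ideal, x1,...,xs a d-sequence generating an ideal J ⊆ I that is a reduction of I with I^(r+1) = J*I^r, and assume (x1,...,x_i) ∩ I^(r+1) = (x1,...,x_i)*I^r for all i = 1,...,s-1. Then for all i = 1,...,s: ((x1,...,x_{i-1}) : x_i) ∩ I^(r+1) = (x1,...,x_{i-1})*I^r. -/
/-! Since `I ^ (r + 1) = J * I ^ r ≤ J`, intersecting with `I ^ (r + 1)` factors through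
intersecting with `J`, which by the d-sequence property cuts the colon ideal
`(x₁, …, x_{i-1}) : x_i` down to `(x₁, …, x_{i-1})` itself; the hypothesis on
`(x₁, …, x_{i-1}) ∩ I ^ (r + 1)` then finishes. -/

/-- The ideal generated by the first `i` elements of the sequence `x`. -/
def firstIdeal {R : Type*} [CommRing R] {s : ℕ} (x : Fin s → R) (i : ℕ) : Ideal R :=
  Ideal.span (x '' {j : Fin s | (j : ℕ) < i})

@[simp]
lemma firstIdeal_zero {R : Type*} [CommRing R] {s : ℕ} (x : Fin s → R) :
    firstIdeal x 0 = ⊥ := by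
  simp [firstIdeal]

lemma Ideal.colon_inf_eq_inf_of_le {R : Type*} [CommRing R] {A J N : Ideal R} {y : R}
    (hcolon : A.colon (Ideal.span {y}) ⊓ J = A) (hNJ : N ≤ J) :
    A.colon (Ideal.span {y}) ⊓ N = A ⊓ N := by
  calc A.colon (Ideal.span {y}) ⊓ N = A.colon (Ideal.span {y}) ⊓ J ⊓ N := by
        rw [inf_assoc, inf_eq_right.mpr hNJ]
    _ = A ⊓ N := by rw [hcolon]

lemma firstIdeal_inf_eq_mul_of_lt {R : Type*} [CommRing R] {N M : Ideal R} {s : ℕ}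
    {x : Fin s → R} (h : ∀ i : ℕ, 1 ≤ i → i ≤ s - 1 → firstIdeal x i ⊓ N = firstIdeal x i * M)
    {i : ℕ} (hi : i < s) :
    firstIdeal x i ⊓ N = firstIdeal x i * M := by
  rcases Nat.eq_zero_or_pos i with rfl | hpos
  · simp
  · exact h i hpos (by omega)

/-- `R` Noetherian local, `x1,…,xs` a d-sequence generating a
reduction `J ⊆ I` with `I^(r+1) = J*I^r`; if `(x1,…,x_i) ∩ I^(r+1) = (x1,…,x_i)*I^r`
for `1 ≤ i ≤ s-1`, then `((x1,…,x_{i-1}) : x_i) ∩ I^(r+1) = (x1,…,x_{i-1})*I^r`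
for all `1 ≤ i ≤ s`. -/
theorem stmt_9 {R : Type*} [CommRing R]
    (I J : Ideal R) (s : ℕ) (x : Fin s → R)
    (hd : ∀ i : ℕ, ∀ hi : i < s,
      (firstIdeal x i).colon (Ideal.span {x ⟨i, hi⟩}) ⊓ J = firstIdeal x i)
    (r : ℕ) (hred : I ^ (r + 1) = J * I ^ r)
    (hVV : ∀ i : ℕ, 1 ≤ i → i ≤ s - 1 →
      firstIdeal x i ⊓ I ^ (r + 1) = firstIdeal x i * I ^ r) :
    ∀ i : ℕ, ∀ hi1 : 1 ≤ i, ∀ hi2 : i ≤ s,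
      (firstIdeal x (i - 1)).colon (Ideal.span {x ⟨i - 1, by omega⟩}) ⊓ I ^ (r + 1) =
        firstIdeal x (i - 1) * I ^ r := by
  intro i hi1 hi2
  have hlt : i - 1 < s := by omega
  have hpowJ : I ^ (r + 1) ≤ J := hred ▸ Ideal.mul_le_left
  rw [Ideal.colon_inf_eq_inf_of_le (hd (i - 1) hlt) hpowJ]
  exact firstIdeal_inf_eq_mul_of_lt hVV hlt
end

section
/- Let R = k[a1, a2] be a polynomial ring over a field, let p ≥ 5 be odd, x1 = a1^p, x2 = a2^p, y = a1^2*a2^(p-2), I = (x1, x2, y), J = (x1, x2). Then J is a reduction of I with reduction number exactly p-1: I^p = J*I^(p-1) and y^(p-1) ∉ J*I^(p-2). -/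
/-!
Write `I = J + (y)`. Since `y ^ p = x1 ^ 2 * x2 ^ (p - 2)` lies in `J * I ^ (p - 1)`, expanding
`(J + (y)) ^ p` gives `I ^ p = J * I ^ (p - 1)`. All ideals involved are monomial ideals, so
`y ^ (p - 1) ∈ J * I ^ (p - 2)` would make its exponent dominate that of a product
`x1 ^ a * x2 ^ b * y ^ c` with `a + b ≥ 1` and `a + b + c = p - 1`. Both have degree `p (p - 1)`,
so they are equal, and comparing `a1`-exponents gives `p a + 2 c = 2 (p - 1)` with `c ≤ p - 2`,
which is impossible for odd `p`.
-/

open MvPolynomial Pointwise Finsupp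

namespace Ideal
variable {R : Type*} [CommSemiring R]

theorem sup_pow_succ_le_mul_pow_sup (J K : Ideal R) (n : ℕ) :
    (J ⊔ K) ^ (n + 1) ≤ J * (J ⊔ K) ^ n ⊔ K ^ (n + 1) := by
  induction n with
  | zero => simp only [zero_add, pow_one, pow_zero, one_eq_top, mul_top, le_refl]
  | succ n ih =>
    have hK : K ^ (n + 1) ≤ (J ⊔ K) ^ (n + 1) := pow_right_mono le_sup_right _
    calc (J ⊔ K) ^ (n + 1 + 1) = (J ⊔ K) * (J ⊔ K) ^ (n + 1) := pow_succ' _ _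
      _ ≤ (J ⊔ K) * (J * (J ⊔ K) ^ n ⊔ K ^ (n + 1)) := mul_mono_right ih
      _ = J * (J ⊔ K) ^ (n + 1) ⊔ (J * K ^ (n + 1) ⊔ K ^ (n + 1 + 1)) := by
        simp only [← add_eq_sup]; ring
      _ ≤ J * (J ⊔ K) ^ (n + 1) ⊔ K ^ (n + 1 + 1) :=
        sup_le le_sup_left (sup_le (le_sup_of_le_left (mul_mono_right hK)) le_sup_right)

theorem sup_span_singleton_pow_succ_eq_mul {J : Ideal R} {y : R} {n : ℕ}
    (hy : y ^ (n + 1) ∈ J * (J ⊔ span {y}) ^ n) :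
    (J ⊔ span {y}) ^ (n + 1) = J * (J ⊔ span {y}) ^ n := by
  refine le_antisymm ((sup_pow_succ_le_mul_pow_sup J _ n).trans (sup_le le_rfl ?_)) ?_
  · rwa [span_singleton_pow, span_le, Set.singleton_subset_iff]
  · rw [pow_succ']; exact mul_mono_left le_sup_left

end Ideal

namespace MvPolynomial
variable {σ k : Type*} [CommSemiring k]

theorem span_monomial_image_mul (A B : Set (σ →₀ ℕ)) :
    Ideal.span ((fun s => monomial s (1 : k)) '' A) * Ideal.span ((fun s => monomial s 1) '' B) =
      Ideal.span ((fun s => monomial s 1) '' (A + B)) := by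
  rw [Ideal.span_mul_span', ← Set.image2_mul, ← Set.image2_add, Set.image2_image_left,
    Set.image2_image_right, Set.image_image2]
  simp only [monomial_mul, mul_one]

theorem span_monomial_image_pow (A : Set (σ →₀ ℕ)) (n : ℕ) :
    Ideal.span ((fun s => monomial s (1 : k)) '' A) ^ n =
      Ideal.span ((fun s => monomial s 1) '' (n • A)) := by
  induction n with
  | zero => simp
  | succ n ih => rw [pow_succ, ih, span_monomial_image_mul, succ_nsmul]

end MvPolynomial

theorem exists_coords_of_mem_generators {p : ℕ} {g : Fin 2 →₀ ℕ}
    (hg : g ∈ ({single 0 p, single 1 p, single 0 2 + single 1 (p - 2)} : Set (Fin 2 →₀ ℕ)))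
    (hp : 2 ≤ p) :
    ∃ a c, c ≤ 1 ∧ g 0 = p * a + 2 * c ∧ g 0 + g 1 = p := by
  rcases hg with rfl | rfl | rfl
  · exact ⟨1, 0, zero_le_one, by simp, by simp⟩
  · exact ⟨0, 0, zero_le_one, by simp, by simp⟩
  · exact ⟨0, 1, le_rfl, by simp, by simp [Nat.add_sub_cancel' hp]⟩

-- `a` and `c` count the summands `single 0 p` and `single 0 2 + single 1 (p - 2)`.
theorem exists_coords_of_mem_nsmul {p n : ℕ} {s : Fin 2 →₀ ℕ}
    (hs : s ∈ n • ({single 0 p, single 1 p, single 0 2 + single 1 (p - 2)} :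
      Set (Fin 2 →₀ ℕ))) (hp : 2 ≤ p) :
    ∃ a c, c ≤ n ∧ s 0 = p * a + 2 * c ∧ s 0 + s 1 = p * n := by
  induction n generalizing s with
  | zero =>
    rw [zero_nsmul, Set.mem_zero] at hs
    exact ⟨0, 0, le_rfl, by simp [hs], by simp [hs]⟩
  | succ n ih =>
    rw [succ_nsmul] at hs
    obtain ⟨t, ht, g, hg, rfl⟩ := Set.mem_add.mp hs
    obtain ⟨a, c, hc, ht0, htdeg⟩ := ih ht
    obtain ⟨a', c', hc', hg0, hgdeg⟩ := exists_coords_of_mem_generators hg hp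
    refine ⟨a + a', c + c', by omega, ?_, ?_⟩ <;> simp only [Finsupp.add_apply]
    · rw [ht0, hg0]; ring
    · rw [mul_add_one]; omega

theorem exists_coords_of_mem_add_nsmul {p n : ℕ} {s : Fin 2 →₀ ℕ}
    (hs : s ∈ ({single 0 p, single 1 p} : Set (Fin 2 →₀ ℕ)) +
      n • {single 0 p, single 1 p, single 0 2 + single 1 (p - 2)}) (hp : 2 ≤ p) :
    ∃ a c, c ≤ n ∧ s 0 = p * a + 2 * c ∧ s 0 + s 1 = p * (n + 1) := by
  obtain ⟨g, hg, t, ht, rfl⟩ := Set.mem_add.mp hs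
  obtain ⟨a, c, hc, ht0, htdeg⟩ := exists_coords_of_mem_nsmul ht hp
  obtain ⟨a', hg0, hgdeg⟩ : ∃ a', g 0 = p * a' ∧ g 0 + g 1 = p := by
    rcases hg with rfl | rfl
    exacts [⟨1, by simp, by simp⟩, ⟨0, by simp, by simp⟩]
  refine ⟨a' + a, c, hc, ?_, ?_⟩ <;> simp only [Finsupp.add_apply]
  · rw [ht0, hg0]; ring
  · rw [mul_add_one]; omega

theorem mul_add_two_mul_ne_two_mul_sub_one {p a c : ℕ} (hp : 2 ≤ p) (hodd : Odd p)
    (hc : c ≤ p - 2) :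
    p * a + 2 * c ≠ 2 * (p - 1) := by
  intro h
  obtain ⟨m, rfl⟩ := hodd
  simp only [Nat.add_sub_cancel] at h
  have ha : a ≤ 1 := by nlinarith
  interval_cases a <;> omega

theorem not_le_of_mem_add_nsmul {p : ℕ} {s : Fin 2 →₀ ℕ}
    (hs : s ∈ ({single 0 p, single 1 p} : Set (Fin 2 →₀ ℕ)) +
      (p - 2) • {single 0 p, single 1 p, single 0 2 + single 1 (p - 2)})
    (hp : 2 ≤ p) (hodd : Odd p) :
    ¬ s ≤ (p - 1) • (single 0 2 + single 1 (p - 2)) := by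
  obtain ⟨a, c, hc, h0, hdeg⟩ := exists_coords_of_mem_add_nsmul hs hp
  intro hle
  obtain ⟨q, rfl⟩ := Nat.exists_eq_add_of_le' hp
  have hle0 : s 0 ≤ (q + 1) * 2 := by simpa using hle 0
  have hle1 : s 1 ≤ (q + 1) * q := by simpa using hle 1
  have hs0 : s 0 = 2 * (q + 1) := by rw [add_tsub_cancel_right] at hdeg; nlinarith
  exact mul_add_two_mul_ne_two_mul_sub_one (a := a) hp hodd hc (by omega)

theorem span_pow_eq_mul_pow {k : Type*} [CommSemiring k] {p : ℕ} (hp : 2 ≤ p) :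
    Ideal.span {(X 0 : MvPolynomial (Fin 2) k) ^ p, X 1 ^ p, X 0 ^ 2 * X 1 ^ (p - 2)} ^ p =
      Ideal.span {X 0 ^ p, X 1 ^ p} *
        Ideal.span {X 0 ^ p, X 1 ^ p, X 0 ^ 2 * X 1 ^ (p - 2)} ^ (p - 1) := by
  set y : MvPolynomial (Fin 2) k := X 0 ^ 2 * X 1 ^ (p - 2)
  set J := Ideal.span {(X 0 : MvPolynomial (Fin 2) k) ^ p, X 1 ^ p}
  have hI : Ideal.span {X 0 ^ p, X 1 ^ p, y} = J ⊔ Ideal.span {y} := by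
    rw [← Ideal.span_union, Set.insert_union, Set.singleton_union]
  have hx0J : X 0 ^ p ∈ J := Ideal.subset_span (by simp)
  have hyp : y ^ (p - 1 + 1) ∈ J * (J ⊔ Ideal.span {y}) ^ (p - 1) := by
    have hyp_eq : y ^ (p - 1 + 1) = X 0 ^ p * (X 0 ^ p * (X 1 ^ p) ^ (p - 2)) := by
      rw [Nat.sub_add_cancel (by omega : 1 ≤ p)]; ring
    have hx1J : X 1 ^ p ∈ J := Ideal.subset_span (by simp)
    rw [hyp_eq, show p - 1 = p - 2 + 1 by omega, pow_succ']
    exact Ideal.mul_mem_mul hx0J (Ideal.mul_mem_mul (Ideal.mem_sup_left hx0J)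
      (Ideal.pow_mem_pow (Ideal.mem_sup_left hx1J) _))
  have h := Ideal.sup_span_singleton_pow_succ_eq_mul hyp
  rwa [Nat.sub_add_cancel (by omega : 1 ≤ p), ← hI] at h

theorem pow_notMem_mul_pow {k : Type*} [CommSemiring k] [Nontrivial k] {p : ℕ} (hp : 2 ≤ p)
    (hodd : Odd p) :
    ((X 0 : MvPolynomial (Fin 2) k) ^ 2 * X 1 ^ (p - 2)) ^ (p - 1) ∉
      Ideal.span {X 0 ^ p, X 1 ^ p} *
        Ideal.span {X 0 ^ p, X 1 ^ p, X 0 ^ 2 * X 1 ^ (p - 2)} ^ (p - 2) := by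
  have hy : (X 0 ^ 2 * X 1 ^ (p - 2) : MvPolynomial (Fin 2) k) =
      monomial (single 0 2 + single 1 (p - 2)) 1 := by
    rw [X_pow_eq_monomial, X_pow_eq_monomial, monomial_mul, one_mul]
  have hJ : ({X 0 ^ p, X 1 ^ p} : Set (MvPolynomial (Fin 2) k)) =
      (fun s => monomial s 1) '' {single 0 p, single 1 p} := by
    simp [Set.image_insert_eq, X_pow_eq_monomial]
  have hI : ({X 0 ^ p, X 1 ^ p, monomial (single 0 2 + single 1 (p - 2)) 1} :
      Set (MvPolynomial (Fin 2) k)) =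
      (fun s => monomial s 1) '' {single 0 p, single 1 p, single 0 2 + single 1 (p - 2)} := by
    simp [Set.image_insert_eq, X_pow_eq_monomial]
  rw [hy, hJ, hI, span_monomial_image_pow, span_monomial_image_mul, monomial_pow, one_pow,
    mem_ideal_span_monomial_image]
  intro h
  obtain ⟨s, hs, hle⟩ := h ((p - 1) • (single 0 2 + single 1 (p - 2)))
    (by rw [MvPolynomial.mem_support_iff, coeff_monomial, if_pos rfl]; exact one_ne_zero)
  exact not_le_of_mem_add_nsmul hs hp hodd hle

/-- In `R = k[a1,a2]` with `p ≥ 5` odd, `x1 = a1^p`, `x2 = a2^p`,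
`y = a1²*a2^(p-2)`, `I = (x1,x2,y)`, `J = (x1,x2)`: `J` is a reduction of `I` with
reduction number exactly `p-1`, i.e. `I^p = J*I^(p-1)` and `y^(p-1) ∉ J*I^(p-2)`. -/
theorem stmt_17 {k : Type*} [Field k] (p : ℕ) (hp : 5 ≤ p) (hodd : Odd p)
    (a1 a2 y : MvPolynomial (Fin 2) k) (ha1 : a1 = X 0) (ha2 : a2 = X 1)
    (hy : y = a1 ^ 2 * a2 ^ (p - 2))
    (I J : Ideal (MvPolynomial (Fin 2) k))
    (hI : I = Ideal.span {a1 ^ p, a2 ^ p, y})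
    (hJ : J = Ideal.span {a1 ^ p, a2 ^ p}) :
    I ^ p = J * I ^ (p - 1) ∧ y ^ (p - 1) ∉ J * I ^ (p - 2) := by
  subst ha1 ha2 hy hI hJ
  exact ⟨span_pow_eq_mul_pow (by omega), pow_notMem_mul_pow (by omega) hodd⟩
end
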